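/- For all nonnegative integers p and q with |q|<1 (or q an indeterminate), one has the identity ∑_{k=0}^{⌊p/2⌋} (-1)^k q^{2·C(k,2)} / ((q²;q²)_k · (q;q)_{p-2k}) = q^{C(p,2)} / (q;q)_p, where (x;q)_n = ∏_{i=0}^{n-1}(1 - x q^i) is the q-Pochhammer symbol and C(k,2) = k(k-1)/2. -/
import Mathlib


open Finset

/-- The q-Pochhammer symbol `(x;q)_n = ∏_{i=0}^{n-1} (1 - x qⁱ)`. -/
noncomputable def qPoch {K : Type*} [Field K] (x q : K) (n : ℕ) : K :=
  ∏ i ∈ Finset.range n, (1 - x * q ^ i)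

/-- The Gaussian binomial coefficient `[n choose k]_q`. -/
noncomputable def qBinom {K : Type*} [Field K] (q : K) (n k : ℕ) : K :=
  qPoch q q n / (qPoch q q k * qPoch q q (n - k))

/-- Cigler's moment sequence `P_n(a)`. -/
noncomputable def cigP {K : Type*} [Field K] (a q : K) (n : ℕ) : K :=
  (1 / qPoch q (q ^ 2) ((n + 1) / 2)) * ∑ k ∈ Finset.range (n + 1), qBinom q n k * a ^ k

/-- The recurrence coefficients `λ_n` of Definition 1. -/
noncomputable def cigLam {K : Type*} [Field K] (a q : K) (n : ℕ) : K :=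
  if Even n then
    q ^ n * (1 + a) ^ 2 * (1 - q ^ (n - 1)) * (1 - q ^ n) / (1 - q ^ (2 * n - 1)) ^ 2
  else
    -((a + q ^ n) * (a + q ^ (n - 1)) * (1 + a * q ^ (n - 1)) * (1 + a * q ^ n)) /
      ((1 + a) ^ 2 * (1 - q ^ (2 * n - 1)) ^ 2)

/-- The recurrence coefficients `b_n` of Definition 1 (integer exponents via `zpow`). -/
noncomputable def cigB {K : Type*} [Field K] (a q : K) (n : ℕ) : K :=
  if Even n then
    -(1 - q) / ((1 - q ^ (2 * (n : ℤ) + 1)) * (1 - q ^ (2 * (n : ℤ) - 1)) * (1 + a)) *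
      (a * (1 - q ^ (2 * (n : ℤ) - 1)) * (1 - q ^ ((n : ℤ) + 1)) * (1 - q ^ (n : ℤ)) / (1 - q)
        - q ^ (n : ℤ) * ((1 - q ^ ((n : ℤ) - 1)) / (1 - q)
            + q ^ ((n : ℤ) + 1) * (1 - q ^ (n : ℤ)) / (1 - q)) * (1 + a) ^ 2)
  else
    (1 - q) / ((1 - q ^ (2 * (n : ℤ) + 1)) * (1 - q ^ (2 * (n : ℤ) - 1)) * (1 + a)) *
      (a * (1 - q ^ (2 * (n : ℤ) + 1)) * (1 - q ^ ((n : ℤ) - 1)) * (1 - q ^ (n : ℤ)) / (1 - q)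
        - q ^ ((n : ℤ) + 1) * ((1 - q ^ (n : ℤ)) / (1 - q)
            + q ^ ((n : ℤ) - 2) * (1 - q ^ ((n : ℤ) + 1)) / (1 - q)) * (1 + a) ^ 2)

/-- The even-indexed expansion coefficients `a_{2k}^{(n)}` of Proposition 2. -/
noncomputable def aEven {K : Type*} [Field K] (a q : K) (n k : ℕ) : K :=
  qPoch (-(a * q ^ (2 * (n : ℤ) - 1))) q⁻¹ (2 * k) /
      qPoch (q ^ (4 * (n : ℤ) - 2 * (k : ℤ) - 1)) (q ^ 2)⁻¹ k * qBinom (q ^ 2) n k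

/-- The odd-indexed expansion coefficients `a_{2k+1}^{(n)}` of Proposition 2. -/
noncomputable def aOdd {K : Type*} [Field K] (a q : K) (n k : ℕ) : K :=
  (1 + a) * qPoch (-(a * q ^ (2 * (n : ℤ) - 1))) q⁻¹ (2 * k) /
      qPoch (q ^ (4 * (n : ℤ) - 2 * (k : ℤ) - 1)) (q ^ 2)⁻¹ (k + 1) *
    qBinom (q ^ 2) n (k + 1) * (1 - q ^ (2 * (k + 1)))

section Aux
variable {K : Type*} [Field K] (q : K)
lemma qPoch_succ' (x p : K) (n : ℕ) :
    qPoch x p (n + 1) = qPoch x p n * (1 - x * p ^ n) := Finset.prod_range_succ _ _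

variable (hq : ∀ i : ℕ, 1 ≤ i → q ^ i ≠ 1)
include hq

lemma one_sub_pow_ne {i : ℕ} (hi : 1 ≤ i) : (1 : K) - q ^ i ≠ 0 :=
  sub_ne_zero.mpr (Ne.symm (hq i hi))

lemma P_ne (n : ℕ) : qPoch q q n ≠ 0 := by
  unfold qPoch
  rw [Finset.prod_ne_zero_iff]
  intro i _
  have h : q * q ^ i = q ^ (i + 1) := by ring
  rw [h]
  exact one_sub_pow_ne q hq (by omega)

lemma P2_ne (n : ℕ) : qPoch (q ^ 2) (q ^ 2) n ≠ 0 := by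
  unfold qPoch
  rw [Finset.prod_ne_zero_iff]
  intro i _
  have h : q ^ 2 * (q ^ 2) ^ i = q ^ (2 * i + 2) := by
    rw [← pow_mul, ← pow_add]; ring_nf
  rw [h]
  exact one_sub_pow_ne q hq (by omega)

/-- telescoping auxiliary -/
noncomputable def U (q : K) (n k : ℕ) : K :=
  (-1) ^ k * q ^ (k * (k - 1)) * (1 - q ^ (2 * k)) /
    (qPoch (q ^ 2) (q ^ 2) k * qPoch q q (n - 2 * k))

lemma dk (k j : ℕ) :
    (1 - q ^ (2 * k + 2 + j)) *
        ((-1 : K) ^ k * q ^ (k * (k - 1)) / (qPoch (q ^ 2) (q ^ 2) k * qPoch q q (j + 2)))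
      - q ^ (2 * k + 1 + j) *
        ((-1) ^ k * q ^ (k * (k - 1)) / (qPoch (q ^ 2) (q ^ 2) k * qPoch q q (j + 1)))
    = U q (2 * k + 2 + j) k - U q (2 * k + 2 + j) (k + 1) := by
  unfold U
  have e1 : 2 * k + 2 + j - 2 * k = j + 2 := by omega
  have e2 : 2 * k + 2 + j - 2 * (k + 1) = j := by omega
  rw [e1, e2, Nat.add_sub_cancel]
  have he : (k + 1) * k = k * (k - 1) + (k + k) := by
    cases k with
    | zero => rfl
    | succ s => simp [Nat.succ_sub_one]; ring
  rw [he, pow_add]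
  rw [qPoch_succ' q q (j + 1), qPoch_succ' q q j, qPoch_succ' (q ^ 2) (q ^ 2) k]
  have hA := P2_ne q hq k
  have hB := P_ne q hq j
  have h1 : (1 : K) - q * q ^ j ≠ 0 := by
    have h : q * q ^ j = q ^ (j + 1) := by ring
    rw [h]; exact one_sub_pow_ne q hq (by omega)
  have h2 : (1 : K) - q * q ^ (j + 1) ≠ 0 := by
    have h : q * q ^ (j + 1) = q ^ (j + 2) := by ring
    rw [h]; exact one_sub_pow_ne q hq (by omega)
  have h3 : (1 : K) - q ^ 2 * (q ^ 2) ^ k ≠ 0 := by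
    have h : q ^ 2 * (q ^ 2) ^ k = q ^ (2 * k + 2) := by
      rw [← pow_mul, ← pow_add]; ring_nf
    rw [h]; exact one_sub_pow_ne q hq (by omega)
  have hX1 : qPoch (q ^ 2) (q ^ 2) k *
      (qPoch q q j * (1 - q * q ^ j) * (1 - q * q ^ (j + 1))) ≠ 0 :=
    mul_ne_zero hA (mul_ne_zero (mul_ne_zero hB h1) h2)
  have hX2 : qPoch (q ^ 2) (q ^ 2) k * (qPoch q q j * (1 - q * q ^ j)) ≠ 0 :=
    mul_ne_zero hA (mul_ne_zero hB h1)
  have hY2 : qPoch (q ^ 2) (q ^ 2) k * (1 - q ^ 2 * (q ^ 2) ^ k) * qPoch q q j ≠ 0 :=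
    mul_ne_zero (mul_ne_zero hA h3) hB
  rw [mul_div_assoc', mul_div_assoc', div_sub_div _ _ hX1 hX2, div_sub_div _ _ hX1 hY2,
    div_eq_div_iff (mul_ne_zero hX1 hX2) (mul_ne_zero hX1 hY2)]
  ring

end Aux

section Key
variable {K : Type*} [Field K] (q : K)
variable (hq : ∀ i : ℕ, 1 ≤ i → q ^ i ≠ 1)
include hq

lemma key (n : ℕ) :
    (1 - q ^ (n + 1)) * ∑ k ∈ Finset.range ((n + 1) / 2 + 1),
        (-1 : K) ^ k * q ^ (k * (k - 1)) /
          (qPoch (q ^ 2) (q ^ 2) k * qPoch q q (n + 1 - 2 * k))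
    = q ^ n * ∑ k ∈ Finset.range (n / 2 + 1),
        (-1 : K) ^ k * q ^ (k * (k - 1)) /
          (qPoch (q ^ 2) (q ^ 2) k * qPoch q q (n - 2 * k)) := by
  rcases Nat.even_or_odd n with h | h
  · -- n = m + m
    obtain ⟨m, rfl⟩ := h
    have h1 : (m + m + 1) / 2 + 1 = m + 1 := by omega
    have h2 : (m + m) / 2 + 1 = m + 1 := by omega
    rw [h1, h2, Finset.mul_sum, Finset.mul_sum, ← sub_eq_zero, ← Finset.sum_sub_distrib,
      Finset.sum_range_succ]
    have tele : ∑ k ∈ Finset.range m,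
        ((1 - q ^ (m + m + 1)) *
            ((-1 : K) ^ k * q ^ (k * (k - 1)) /
              (qPoch (q ^ 2) (q ^ 2) k * qPoch q q (m + m + 1 - 2 * k)))
          - q ^ (m + m) *
            ((-1 : K) ^ k * q ^ (k * (k - 1)) /
              (qPoch (q ^ 2) (q ^ 2) k * qPoch q q (m + m - 2 * k))))
        = U q (m + m + 1) 0 - U q (m + m + 1) m := by
      rw [← Finset.sum_range_sub' (fun k => U q (m + m + 1) k) m]
      refine Finset.sum_congr rfl fun k hk => ?_
      rw [Finset.mem_range] at hk
      obtain ⟨j, hj⟩ : ∃ j, m + m + 1 = 2 * k + 2 + j := ⟨m + m - 1 - 2 * k, by omega⟩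
      have e1 : m + m + 1 - 2 * k = j + 2 := by omega
      have e2 : m + m - 2 * k = j + 1 := by omega
      have e3 : m + m = 2 * k + 1 + j := by omega
      rw [e1, e2, hj, e3]
      exact dk q hq k j
    rw [tele]
    have hU0 : U q (m + m + 1) 0 = 0 := by simp [U]
    have hlast :
        (1 - q ^ (m + m + 1)) *
            ((-1 : K) ^ m * q ^ (m * (m - 1)) /
              (qPoch (q ^ 2) (q ^ 2) m * qPoch q q (m + m + 1 - 2 * m)))
          - q ^ (m + m) *
            ((-1 : K) ^ m * q ^ (m * (m - 1)) /
              (qPoch (q ^ 2) (q ^ 2) m * qPoch q q (m + m - 2 * m)))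
        = U q (m + m + 1) m := by
      have e1 : m + m + 1 - 2 * m = 1 := by omega
      have e2 : m + m - 2 * m = 0 := by omega
      unfold U
      rw [e1, e2]
      have hPm := P2_ne q hq m
      have hq1 : (1 : K) - q * q ^ 0 ≠ 0 := by
        simpa using one_sub_pow_ne q hq (i := 1) le_rfl
      have hP1 : qPoch q q 1 = 1 - q * q ^ 0 := by
        simp [qPoch]
      have hP0 : qPoch q q 0 = 1 := by simp [qPoch]
      rw [hP1, hP0, mul_one, mul_div_assoc', mul_div_assoc',
        div_sub_div _ _ (mul_ne_zero hPm hq1) hPm,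
        div_eq_div_iff (mul_ne_zero (mul_ne_zero hPm hq1) hPm) (mul_ne_zero hPm hq1)]
      ring
    rw [hlast, hU0]
    ring
  · -- n = 2 * m + 1
    obtain ⟨m, rfl⟩ := h
    have h1 : (2 * m + 1 + 1) / 2 + 1 = (m + 1) + 1 := by omega
    have h2 : (2 * m + 1) / 2 + 1 = m + 1 := by omega
    rw [h1, h2, Finset.sum_range_succ, mul_add, Finset.mul_sum, Finset.mul_sum,
      ← sub_eq_zero]
    have rearr : ∀ a b c : K, a + b - c = (a - c) + b := fun a b c => by ring
    rw [rearr, ← Finset.sum_sub_distrib]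
    have tele : ∑ k ∈ Finset.range (m + 1),
        ((1 - q ^ (2 * m + 1 + 1)) *
            ((-1 : K) ^ k * q ^ (k * (k - 1)) /
              (qPoch (q ^ 2) (q ^ 2) k * qPoch q q (2 * m + 1 + 1 - 2 * k)))
          - q ^ (2 * m + 1) *
            ((-1 : K) ^ k * q ^ (k * (k - 1)) /
              (qPoch (q ^ 2) (q ^ 2) k * qPoch q q (2 * m + 1 - 2 * k))))
        = U q (2 * m + 1 + 1) 0 - U q (2 * m + 1 + 1) (m + 1) := by
      rw [← Finset.sum_range_sub' (fun k => U q (2 * m + 1 + 1) k) (m + 1)]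
      refine Finset.sum_congr rfl fun k hk => ?_
      rw [Finset.mem_range] at hk
      obtain ⟨j, hj⟩ : ∃ j, 2 * m + 1 + 1 = 2 * k + 2 + j := ⟨2 * m - 2 * k, by omega⟩
      have e1 : 2 * m + 1 + 1 - 2 * k = j + 2 := by omega
      have e2 : 2 * m + 1 - 2 * k = j + 1 := by omega
      have e3 : 2 * m + 1 = 2 * k + 1 + j := by omega
      rw [e1, e2, hj, e3]
      exact dk q hq k j
    rw [tele]
    have hU0 : U q (2 * m + 1 + 1) 0 = 0 := by simp [U]
    have hlast :
        (1 - q ^ (2 * m + 1 + 1)) *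
            ((-1 : K) ^ (m + 1) * q ^ ((m + 1) * (m + 1 - 1)) /
              (qPoch (q ^ 2) (q ^ 2) (m + 1) * qPoch q q (2 * m + 1 + 1 - 2 * (m + 1))))
        = U q (2 * m + 1 + 1) (m + 1) := by
      have e1 : 2 * m + 1 + 1 - 2 * (m + 1) = 0 := by omega
      unfold U
      rw [e1]
      have e2 : 2 * (m + 1) = 2 * m + 1 + 1 := by omega
      rw [e2]
      ring
    rw [hU0, hlast]
    ring

lemma main' (p : ℕ) :
    ∑ k ∈ Finset.range (p / 2 + 1),
        (-1 : K) ^ k * q ^ (k * (k - 1)) /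
          (qPoch (q ^ 2) (q ^ 2) k * qPoch q q (p - 2 * k)) =
      q ^ Nat.choose p 2 / qPoch q q p := by
  induction p with
  | zero => simp [qPoch]
  | succ n ih =>
    have hk := key q hq n
    rw [ih] at hk
    have hne : (1 : K) - q ^ (n + 1) ≠ 0 := one_sub_pow_ne q hq (by omega)
    have hPn := P_ne q hq n
    have hch : Nat.choose (n + 1) 2 = n + Nat.choose n 2 := by
      rw [Nat.choose_succ_succ, Nat.choose_one_right]
    rw [hch, qPoch_succ', pow_add]
    have hqq : q * q ^ n = q ^ (n + 1) := by ring
    rw [hqq]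
    rw [eq_div_iff (mul_ne_zero hPn hne)]
    calc (∑ k ∈ Finset.range ((n + 1) / 2 + 1),
            (-1 : K) ^ k * q ^ (k * (k - 1)) /
              (qPoch (q ^ 2) (q ^ 2) k * qPoch q q (n + 1 - 2 * k))) *
          (qPoch q q n * (1 - q ^ (n + 1)))
        = ((1 - q ^ (n + 1)) * ∑ k ∈ Finset.range ((n + 1) / 2 + 1),
            (-1 : K) ^ k * q ^ (k * (k - 1)) /
              (qPoch (q ^ 2) (q ^ 2) k * qPoch q q (n + 1 - 2 * k))) * qPoch q q n := by
          ring
      _ = q ^ n * (q ^ Nat.choose n 2 / qPoch q q n) * qPoch q q n := by rw [hk]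
      _ = q ^ n * q ^ Nat.choose n 2 := by field_simp
end Key

lemma two_mul_choose_two (k : ℕ) : 2 * Nat.choose k 2 = k * (k - 1) := by
  cases k with
  | zero => rfl
  | succ s =>
    rw [Nat.choose_two_right, Nat.succ_sub_one]
    have : 2 ∣ (s + 1) * s := by
      rcases Nat.even_or_odd s with h | h
      · exact Dvd.dvd.mul_left h.two_dvd _
      · exact Dvd.dvd.mul_right (Odd.add_one h).two_dvd _
    omega


/-- the k-sum evaluation (limiting case of the q-Vandermonde sum). -/
theorem qVandermonde_limit {K : Type*} [Field K] (q : K)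
    (hq : ∀ i : ℕ, 1 ≤ i → q ^ i ≠ 1) (p : ℕ) :
    ∑ k ∈ Finset.range (p / 2 + 1),
        (-1 : K) ^ k * q ^ (2 * Nat.choose k 2) /
          (qPoch (q ^ 2) (q ^ 2) k * qPoch q q (p - 2 * k)) =
      q ^ Nat.choose p 2 / qPoch q q p := by
  simp only [two_mul_choose_two]
  exact main' q hq p
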